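/- arXiv:1712.04231 — 10 statements merged into one kernel-verified Lean document; each statement's English description precedes it below -/
import Mathlib

section
/- Let (W_n) be a normalized recursive polynomial sequence of order two with polynomial coefficients A(z), B(z), and let c ∈ ℂ with B(c) ≠ 0 and Δ(c) = A(c)² + 4B(c) ≠ 0. If W_n(c) = 0 for some n ≥ 1, then g⁺(c) ≠ 0 and g⁻(c) ≠ 0, where g^±(c) = (2W_1(c) − A(c) ± √Δ(c))/2. -/
lemma stmt4_aux (A B : Polynomial ℂ) (W : ℕ → Polynomial ℂ) (hW0 : W 0 = 1)
    (hrec : ∀ n, 2 ≤ n → W n = A * W (n - 1) + B * W (n - 2))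
    (c x : ℂ) (hx : x ^ 2 = A.eval c * x + B.eval c) (h1 : (W 1).eval c = x) :
    ∀ n, (W n).eval c = x ^ n := by
  intro n
  induction n using Nat.strong_induction_on with
  | _ n ih =>
    match n with
    | 0 => simp [hW0]
    | 1 => simpa using h1
    | (m+2) =>
      rw [hrec (m+2) (by omega)]
      simp only [Polynomial.eval_add, Polynomial.eval_mul]
      have e1 : m + 2 - 1 = m + 1 := by omega
      have e2 : m + 2 - 2 = m := by omega
      rw [e1, e2, ih (m+1) (by omega), ih m (by omega)]
      have : x ^ (m + 2) = x ^ m * x ^ 2 := by ring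
      rw [this, hx]; ring

theorem stmt_4 (A B : Polynomial ℂ) (W : ℕ → Polynomial ℂ) (hW0 : W 0 = 1)
    (hrec : ∀ n, 2 ≤ n → W n = A * W (n - 1) + B * W (n - 2))
    (c s : ℂ) (hB : B.eval c ≠ 0)
    (hΔ : A.eval c ^ 2 + 4 * B.eval c ≠ 0)
    (hs : s ^ 2 = A.eval c ^ 2 + 4 * B.eval c)
    (hzero : ∃ n, 1 ≤ n ∧ (W n).eval c = 0) :
    (2 * (W 1).eval c - A.eval c + s) / 2 ≠ 0 ∧
    (2 * (W 1).eval c - A.eval c - s) / 2 ≠ 0 := by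
  obtain ⟨n, hn1, hn0⟩ := hzero
  constructor
  · intro h
    -- then W1 = (A - s)/2 =: b, and W_n(c) = b^n ≠ 0
    have hb2 : ((A.eval c - s) / 2) ^ 2 =
        A.eval c * ((A.eval c - s) / 2) + B.eval c := by linear_combination hs / 4
    have hprod : ((A.eval c - s) / 2) * ((A.eval c + s) / 2) = -B.eval c := by
      linear_combination (-1/4 : ℂ) * hs
    have hbne : ((A.eval c - s) / 2) ≠ 0 := by
      intro h0
      apply hB
      rw [h0] at hprod
      simpa using hprod.symm
    have h1 : (W 1).eval c = (A.eval c - s) / 2 := by linear_combination h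
    have := stmt4_aux A B W hW0 hrec c _ hb2 h1 n
    rw [this] at hn0
    exact hbne ((pow_eq_zero_iff (Nat.one_le_iff_ne_zero.mp hn1)).mp hn0)
  · intro h
    have hb2 : ((A.eval c + s) / 2) ^ 2 =
        A.eval c * ((A.eval c + s) / 2) + B.eval c := by linear_combination hs / 4
    have hprod : ((A.eval c + s) / 2) * ((A.eval c - s) / 2) = -B.eval c := by
      linear_combination (-1/4 : ℂ) * hs
    have hbne : ((A.eval c + s) / 2) ≠ 0 := by
      intro h0
      apply hB
      rw [h0] at hprod
      simpa using hprod.symm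
    have h1 : (W 1).eval c = (A.eval c + s) / 2 := by linear_combination h
    have := stmt4_aux A B W hW0 hrec c _ hb2 h1 n
    rw [this] at hn0
    exact hbne ((pow_eq_zero_iff (Nat.one_le_iff_ne_zero.mp hn1)).mp hn0)
end

section
/- Let c ∈ ℂ with B(c) ≠ 0 and Δ(c) ≠ 0, and suppose g⁺(c) ≠ 0. Set u = g⁻(c)/g⁺(c) and v = (A(c) + √Δ(c))/(A(c) − √Δ(c)). Then for each n ≥ 1, W_n(c) = 0 if and only if u = v^n. -/
/-!
Writing `α, β = (A(c) ± √Δ(c))/2` for the roots of `t² = A(c) t + B(c)`, Binet's formula gives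
`√Δ(c) · W_n(c) = g⁺(c) αⁿ - g⁻(c) βⁿ`. Since `√Δ(c) ≠ 0`, `W_n(c)` vanishes iff
`g⁺(c) αⁿ = g⁻(c) βⁿ`, i.e. iff `u = (α/β)ⁿ = vⁿ`; here `αβ = -B(c) ≠ 0` keeps `β` invertible.
-/

theorem binet_of_sq_eq {R : Type*} [CommRing R] {x : ℕ → R} {a b α β : R}
    (hx : ∀ n, x (n + 2) = a * x (n + 1) + b * x n)
    (hα : α ^ 2 = a * α + b) (hβ : β ^ 2 = a * β + b) (n : ℕ) :
    (α - β) * x n = (x 1 - β * x 0) * α ^ n - (x 1 - α * x 0) * β ^ n := by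
  induction n using Nat.strong_induction_on with
  | _ n ih =>
    match n with
    | 0 => ring
    | 1 => ring
    | m + 2 =>
      rw [hx, pow_add α, pow_add β, hα, hβ]
      linear_combination a * ih (m + 1) (by omega) + b * ih m (by omega)

section Quadratic

variable {K : Type*} [Field K] [NeZero (2 : K)]

theorem half_add_sqrt_sq_eq {a b s : K} (hs : s ^ 2 = a ^ 2 + 4 * b) :
    ((a + s) / 2) ^ 2 = a * ((a + s) / 2) + b := by
  field_simp
  linear_combination hs

theorem half_sub_sqrt_sq_eq {a b s : K} (hs : s ^ 2 = a ^ 2 + 4 * b) :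
    ((a - s) / 2) ^ 2 = a * ((a - s) / 2) + b := by
  field_simp
  linear_combination hs

theorem binet_of_sq_eq_discrim {x : ℕ → K} {a b s : K} (hx0 : x 0 = 1)
    (hx : ∀ n, x (n + 2) = a * x (n + 1) + b * x n) (hs : s ^ 2 = a ^ 2 + 4 * b) (n : ℕ) :
    s * x n = (2 * x 1 - a + s) / 2 * ((a + s) / 2) ^ n
      - (2 * x 1 - a - s) / 2 * ((a - s) / 2) ^ n := by
  have h := binet_of_sq_eq hx (half_add_sqrt_sq_eq hs) (half_sub_sqrt_sq_eq hs) n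
  rw [show (a + s) / 2 - (a - s) / 2 = s by field_simp; ring, hx0] at h
  rw [h]
  field_simp
  ring

theorem sub_sqrt_discrim_ne_zero {a b s : K} (hs : s ^ 2 = a ^ 2 + 4 * b) (hb : b ≠ 0) :
    a - s ≠ 0 := by
  have hprod : (a + s) * (a - s) = -(4 * b) := by linear_combination -hs
  refine right_ne_zero_of_mul (a := a + s) ?_
  rw [hprod, neg_ne_zero, show (4 : K) = 2 * 2 by norm_num]
  exact mul_ne_zero (mul_ne_zero two_ne_zero two_ne_zero) hb

end Quadratic

theorem mul_pow_eq_mul_pow_iff_div_eq {K : Type*} [Field K] {p q α β : K} (hp : p ≠ 0)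
    (hβ : β ≠ 0) (n : ℕ) : p * α ^ n = q * β ^ n ↔ q / p = (α / β) ^ n := by
  rw [div_pow, div_eq_div_iff hp (pow_ne_zero n hβ)]
  constructor <;> intro h <;> linear_combination -h

theorem stmt_6 (A B : Polynomial ℂ) (W : ℕ → Polynomial ℂ) (hW0 : W 0 = 1)
    (hrec : ∀ n, 2 ≤ n → W n = A * W (n - 1) + B * W (n - 2))
    (c s : ℂ) (hB : B.eval c ≠ 0)
    (hΔ : A.eval c ^ 2 + 4 * B.eval c ≠ 0)
    (hs : s ^ 2 = A.eval c ^ 2 + 4 * B.eval c)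
    (hg : (2 * (W 1).eval c - A.eval c + s) / 2 ≠ 0) :
    ∀ n, 1 ≤ n →
      ((W n).eval c = 0 ↔
        ((2 * (W 1).eval c - A.eval c - s) / 2) / ((2 * (W 1).eval c - A.eval c + s) / 2)
          = ((A.eval c + s) / (A.eval c - s)) ^ n) := by
  intro n _
  have hx : ∀ m, (W (m + 2)).eval c
      = A.eval c * (W (m + 1)).eval c + B.eval c * (W m).eval c := fun m => by
    simp [hrec (m + 2) (by omega)]
  have hs0 : s ≠ 0 := by
    rintro rfl
    exact hΔ (by simpa using hs.symm)
  have hβ : (A.eval c - s) / 2 ≠ 0 := div_ne_zero (sub_sqrt_discrim_ne_zero hs hB) two_ne_zero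
  have hbinet := binet_of_sq_eq_discrim (x := fun m => (W m).eval c) (by simp [hW0]) hx hs n
  rw [← mul_eq_zero_iff_left hs0, hbinet, sub_eq_zero, mul_pow_eq_mul_pow_iff_div_eq hg hβ,
    div_div_div_cancel_right₀ two_ne_zero (A.eval c + s)]
end

section
/- Let c ∈ ℂ with B(c) ≠ 0. Then c is a common zero of the sequence (W_n) if and only if Δ(c) ≠ 0 and there exist positive integers p and r with v^p = 1 and v^r = u, where u = g⁻(c)/g⁺(c) and v = (A(c)+√Δ(c))/(A(c)−√Δ(c)). -/
/-!
Write `x n = W_n(c)`, a solution of `x (n + 2) = a x (n + 1) + b x n` with `b ≠ 0`.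
If `Δ = 0`, then `x n` is `(a/2)^n ≠ 0` times an affine function of `n` that is not
identically zero, so it has at most one zero. If `Δ ≠ 0`, Binet's formula
`s x n = g⁺ α^n - g⁻ β^n` with `α, β = (a ± s)/2` shows `x n = 0 ↔ v^n = u`, and `v^n = u`
has two distinct solutions exactly when `v` has finite order and `u` is a positive power of `v`.
-/

section PowEq

variable {M : Type*} [MonoidWithZero M] [IsLeftCancelMulZero M] {v u : M}

theorem exists_ne_pow_eq_iff (hv : v ≠ 0) :
    (∃ i j : ℕ, i ≠ j ∧ v ^ i = u ∧ v ^ j = u) ↔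
      ∃ p r : ℕ, 0 < p ∧ 0 < r ∧ v ^ p = 1 ∧ v ^ r = u := by
  constructor
  · rintro ⟨i, j, hij, hi, hj⟩
    wlog hlt : i < j generalizing i j
    · exact this j i hij.symm hj hi (by omega)
    refine ⟨j - i, j, by omega, by omega, mul_left_cancel₀ (pow_ne_zero i hv) ?_, hj⟩
    rw [← pow_add, Nat.add_sub_cancel' hlt.le, hi, hj, mul_one]
  · rintro ⟨p, r, hp, -, hvp, hvr⟩
    exact ⟨r, r + p, by omega, hvr, by rw [pow_add, hvp, mul_one, hvr]⟩

end PowEq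

section TwoTermRecurrence

variable {K : Type*} {a b s : K} {x : ℕ → K}

theorem binet_of_sq_eq_s7 [CommRing K] (hs : s ^ 2 = a ^ 2 + 4 * b) (hx0 : x 0 = 1)
    (hrec : ∀ n, x (n + 2) = a * x (n + 1) + b * x n) (n : ℕ) :
    2 ^ (n + 1) * s * x n =
      (2 * x 1 - a + s) * (a + s) ^ n - (2 * x 1 - a - s) * (a - s) ^ n := by
  induction n using Nat.twoStepInduction with
  | zero => rw [hx0]; ring
  | one => ring
  | more n ih ih' =>
    rw [hrec n]
    linear_combination 2 * a * ih' + 4 * b * ih -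
      ((2 * x 1 - a + s) * (a + s) ^ n - (2 * x 1 - a - s) * (a - s) ^ n) * hs

theorem binet_of_discr_eq_zero [CommRing K] (hΔ : a ^ 2 + 4 * b = 0) (hx0 : x 0 = 1)
    (hrec : ∀ n, x (n + 2) = a * x (n + 1) + b * x n) (n : ℕ) :
    2 ^ n * a * x n = (a + (2 * x 1 - a) * n) * a ^ n := by
  induction n using Nat.twoStepInduction with
  | zero => rw [hx0]; push_cast; ring
  | one => push_cast; ring
  | more n ih ih' =>
    rw [hrec n]
    push_cast at ih' ⊢
    linear_combination 2 * a * ih' + 4 * b * ih + (a + (2 * x 1 - a) * n) * a ^ n * hΔ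

theorem eq_of_eq_zero_of_discr_eq_zero [CommRing K] [IsDomain K] [CharZero K] (hb : b ≠ 0)
    (hΔ : a ^ 2 + 4 * b = 0) (hx0 : x 0 = 1) (hrec : ∀ n, x (n + 2) = a * x (n + 1) + b * x n)
    {i j : ℕ} (hi : x i = 0) (hj : x j = 0) : i = j := by
  have ha : a ≠ 0 := by
    rintro rfl
    exact hb (by simpa using hΔ)
  have hroot : ∀ n, x n = 0 → a + (2 * x 1 - a) * n = 0 := fun n hn => by
    have h := binet_of_discr_eq_zero hΔ hx0 hrec n
    rw [hn, mul_zero, eq_comm] at h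
    exact (mul_eq_zero.mp h).resolve_right (pow_ne_zero n ha)
  have hslope : 2 * x 1 - a ≠ 0 := fun h => ha (by simpa [h] using hroot i hi)
  exact_mod_cast mul_left_cancel₀ hslope
    (by linear_combination hroot i hi - hroot j hj : (2 * x 1 - a) * (i : K) = (2 * x 1 - a) * j)

theorem add_mul_sub_ne_zero_of_sq_eq [CommRing K] [NoZeroDivisors K] [CharZero K] (hb : b ≠ 0)
    (hs : s ^ 2 = a ^ 2 + 4 * b) : (a + s) * (a - s) ≠ 0 := fun h =>
  hb (by simpa using (by linear_combination -h - hs : (4 : K) * b = 0))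

theorem eq_zero_iff_pow_eq_of_sq_eq [Field K] [CharZero K] (hb : b ≠ 0)
    (hs : s ^ 2 = a ^ 2 + 4 * b) (hs0 : s ≠ 0) (hx0 : x 0 = 1)
    (hrec : ∀ n, x (n + 2) = a * x (n + 1) + b * x n) (n : ℕ) :
    x n = 0 ↔
      ((a + s) / (a - s)) ^ n = (2 * x 1 - a - s) / 2 / ((2 * x 1 - a + s) / 2) := by
  have hroots := add_mul_sub_ne_zero_of_sq_eq hb hs
  have hβ : a - s ≠ 0 := right_ne_zero_of_mul hroots
  have hbinet : x n = 0 ↔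
      (2 * x 1 - a + s) * (a + s) ^ n - (2 * x 1 - a - s) * (a - s) ^ n = 0 := by
    rw [← binet_of_sq_eq_s7 hs hx0 hrec n]
    simp [hs0]
  rw [hbinet, div_div_div_cancel_right₀ two_ne_zero, div_pow, sub_eq_zero]
  by_cases hg : 2 * x 1 - a + s = 0
  · have hgm : 2 * x 1 - a - s ≠ 0 := fun h => hs0 (by linear_combination (hg - h) / 2)
    simp [hg, hgm, hβ, left_ne_zero_of_mul hroots, eq_comm (a := (0 : K))]
  rw [div_eq_div_iff (pow_ne_zero n hβ) hg, mul_comm, eq_comm]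

end TwoTermRecurrence

theorem stmt_7 (A B : Polynomial ℂ) (W : ℕ → Polynomial ℂ) (hW0 : W 0 = 1)
    (hrec : ∀ n, 2 ≤ n → W n = A * W (n - 1) + B * W (n - 2))
    (c s : ℂ) (hB : B.eval c ≠ 0)
    (hs : s ^ 2 = A.eval c ^ 2 + 4 * B.eval c) :
    (∃ i j : ℕ, i ≠ j ∧ (W i).eval c = 0 ∧ (W j).eval c = 0) ↔
      (A.eval c ^ 2 + 4 * B.eval c ≠ 0 ∧
        ∃ p r : ℕ, 0 < p ∧ 0 < r ∧
          ((A.eval c + s) / (A.eval c - s)) ^ p = 1 ∧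
          ((A.eval c + s) / (A.eval c - s)) ^ r =
            ((2 * (W 1).eval c - A.eval c - s) / 2) /
              ((2 * (W 1).eval c - A.eval c + s) / 2)) := by
  have hx0 : (W 0).eval c = 1 := by simp [hW0]
  have hxrec : ∀ n,
      (W (n + 2)).eval c = A.eval c * (W (n + 1)).eval c + B.eval c * (W n).eval c :=
    fun n => by simp [hrec (n + 2) le_add_self]
  by_cases hΔ : A.eval c ^ 2 + 4 * B.eval c = 0
  · simp only [hΔ, ne_eq, not_true_eq_false, false_and, iff_false]
    rintro ⟨i, j, hij, hi, hj⟩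
    exact hij (eq_of_eq_zero_of_discr_eq_zero (x := fun n => (W n).eval c) hB hΔ hx0 hxrec hi hj)
  have hs0 : s ≠ 0 := fun h => hΔ (by rw [← hs, h, zero_pow two_ne_zero])
  have hroots := add_mul_sub_ne_zero_of_sq_eq hB hs
  have hv : (A.eval c + s) / (A.eval c - s) ≠ 0 :=
    div_ne_zero (left_ne_zero_of_mul hroots) (right_ne_zero_of_mul hroots)
  simp_rw [eq_zero_iff_pow_eq_of_sq_eq (x := fun n => (W n).eval c) hB hs hs0 hx0 hxrec]
  simpa [hΔ] using exists_ne_pow_eq_iff hv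
end

section
/- Let c be a common zero of the normalized recursive polynomial sequence (W_n) with B(c) ≠ 0. Let p be the least positive integer with v^p = 1 and r the least positive integer with v^r = u. Then p ≥ 2, 1 ≤ r ≤ p − 1, and for every n ≥ 1, W_n(c) = 0 if and only if n ≡ r (mod p). -/
/-!
Let `α, β = (a ± s)/2` be the roots of `x² = a x + b`, where `a = A(c)`, `b = B(c)` and
`s² = Δ(c)`. If `s = 0` the sequence `w n = W_n(c)` is `(1 + Y n) αⁿ` with `α ≠ 0`, which vanishes
at most once; so a common zero forces `s ≠ 0`. Then `s · w n = g⁺ αⁿ - g⁻ βⁿ`, and `w n = 0`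
exactly when `vⁿ = u` with `v = α/β`. Since `w 0 = 1`, `u ≠ 1`, and the solutions of `vⁿ = u`
are then the residue class of `r` modulo the order `p` of `v`.
-/

theorem pow_eq_iff_mod_eq_of_minimal {M : Type*} [Monoid M] {v u : M} {p r : ℕ}
    (hp : 0 < p ∧ v ^ p = 1 ∧ ∀ m, 0 < m → v ^ m = 1 → p ≤ m)
    (hr : 0 < r ∧ v ^ r = u ∧ ∀ m, 0 < m → v ^ m = u → r ≤ m) (hu : u ≠ 1) :
    2 ≤ p ∧ r < p ∧ ∀ n, v ^ n = u ↔ n % p = r := by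
  obtain ⟨hp0, hvp, hpmin⟩ := hp
  obtain ⟨hr0, hvr, hrmin⟩ := hr
  have hord : orderOf v = p :=
    (orderOf_eq_iff hp0).2 ⟨hvp, fun m hmp hm h ↦ (hpmin m hm h).not_gt hmp⟩
  have hfin : IsOfFinOrder v := isOfFinOrder_iff_pow_eq_one.2 ⟨p, hp0, hvp⟩
  have hvr_mod : v ^ (r % p) = u := by rw [← hord, pow_mod_orderOf, hvr]
  have hr_mod : r % p ≠ 0 := fun h ↦ hu (by rw [← hvr_mod, h, pow_zero])
  have hrp : r < p := (hrmin _ (Nat.pos_of_ne_zero hr_mod) hvr_mod).trans_lt (Nat.mod_lt r hp0)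
  refine ⟨by omega, hrp, fun n ↦ ?_⟩
  rw [← hvr, hfin.pow_inj_mod, hord, Nat.mod_eq_of_lt hrp]

theorem linRec_ext {R : Type*} [Semiring R] {a b : R} {f g : ℕ → R}
    (hf : ∀ n, f (n + 2) = a * f (n + 1) + b * f n)
    (hg : ∀ n, g (n + 2) = a * g (n + 1) + b * g n)
    (h0 : f 0 = g 0) (h1 : f 1 = g 1) : f = g := by
  funext n
  induction n using Nat.strong_induction_on with
  | _ n ih =>
    match n with
    | 0 => exact h0
    | 1 => exact h1
    | m + 2 => rw [hf, hg, ih m (by omega), ih (m + 1) (by omega)]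

section Complex

variable {a b s : ℂ} {w : ℕ → ℂ}

theorem sqrt_discr_ne_zero_of_two_zeros
    (hrec : ∀ n, w (n + 2) = a * w (n + 1) + b * w n) (hw0 : w 0 = 1) (hb : b ≠ 0)
    (hs : s ^ 2 = a ^ 2 + 4 * b) {i j : ℕ} (hij : i ≠ j) (hi : w i = 0) (hj : w j = 0) :
    s ≠ 0 := by
  rintro rfl
  set α := a / 2
  have hb' : b = -α ^ 2 := by linear_combination (-1 / 4 : ℂ) * hs
  have hα : α ≠ 0 := fun h ↦ hb (by rw [hb', h]; ring)
  set Y := w 1 / α - 1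
  have hclosed : w = fun n : ℕ ↦ (1 + n * Y) * α ^ n := by
    refine linRec_ext hrec (fun n ↦ ?_) (by simp [hw0]) (by simp only [Y]; field_simp; ring)
    simp only [hb', α]
    push_cast
    ring
  have hzero : ∀ {n : ℕ}, w n = 0 → 1 + n * Y = 0 := fun {n} h ↦ by
    rw [hclosed] at h
    exact (mul_eq_zero.1 h).resolve_right (pow_ne_zero n hα)
  have hY : Y * ((i : ℂ) - j) = 0 := by linear_combination hzero hi - hzero hj
  rcases mul_eq_zero.1 hY with hY0 | hij'
  · simpa [hY0] using hzero hi
  · exact hij (by exact_mod_cast sub_eq_zero.1 hij')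

theorem linRec_eq_zero_iff_pow_eq
    (hrec : ∀ n, w (n + 2) = a * w (n + 1) + b * w n) (hw0 : w 0 = 1) (hb : b ≠ 0)
    (hs : s ^ 2 = a ^ 2 + 4 * b) (hs0 : s ≠ 0) {i : ℕ} (hi : w i = 0) (n : ℕ) :
    w n = 0 ↔ ((a + s) / (a - s)) ^ n =
      ((2 * w 1 - a - s) / 2) / ((2 * w 1 - a + s) / 2) := by
  set α := (a + s) / 2
  set β := (a - s) / 2
  set gp := (2 * w 1 - a + s) / 2
  set gm := (2 * w 1 - a - s) / 2
  have hαβ : α * β = -b := by linear_combination (-1 / 4 : ℂ) * hs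
  have hβ : β ≠ 0 := fun h ↦ hb (by rw [← neg_neg b, ← hαβ, h, mul_zero, neg_zero])
  have hclosed : w = fun n ↦ (gp * α ^ n - gm * β ^ n) / s := by
    refine linRec_ext hrec (fun n ↦ ?_) (by rw [hw0]; field_simp; ring)
      (by field_simp; ring)
    field_simp
    linear_combination (gp * α ^ n / 4) * hs - (gm * β ^ n / 4) * hs
  have hzero : ∀ n, w n = 0 ↔ gp * α ^ n = gm * β ^ n := fun n ↦ by
    rw [hclosed, div_eq_zero_iff, or_iff_left hs0, sub_eq_zero]
  -- `gp = 0` would make `w` a nonzero multiple of `βⁿ`, which never vanishes.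
  have hgp : gp ≠ 0 := by
    intro hgp
    have hgm : gm ≠ 0 := fun hgm ↦ hs0 (by linear_combination hgp - hgm)
    have := (hzero i).1 hi
    rw [hgp, zero_mul] at this
    exact mul_ne_zero hgm (pow_ne_zero i hβ) this.symm
  have hv : (a + s) / (a - s) = α / β := by simp only [α, β]; field_simp
  rw [hv, div_pow, div_eq_div_iff (pow_ne_zero n hβ) hgp, hzero]
  constructor <;> intro h <;> linear_combination h

end Complex

theorem stmt_8 (A B : Polynomial ℂ) (W : ℕ → Polynomial ℂ) (hW0 : W 0 = 1)
    (hrec : ∀ n, 2 ≤ n → W n = A * W (n - 1) + B * W (n - 2))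
    (c s : ℂ) (hB : B.eval c ≠ 0)
    (hs : s ^ 2 = A.eval c ^ 2 + 4 * B.eval c)
    (hcommon : ∃ i j : ℕ, i ≠ j ∧ (W i).eval c = 0 ∧ (W j).eval c = 0)
    (u v : ℂ)
    (hu : u = ((2 * (W 1).eval c - A.eval c - s) / 2) /
              ((2 * (W 1).eval c - A.eval c + s) / 2))
    (hv : v = (A.eval c + s) / (A.eval c - s))
    (p r : ℕ)
    (hp : 0 < p ∧ v ^ p = 1 ∧ ∀ m, 0 < m → v ^ m = 1 → p ≤ m)
    (hr : 0 < r ∧ v ^ r = u ∧ ∀ m, 0 < m → v ^ m = u → r ≤ m) :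
    2 ≤ p ∧ 1 ≤ r ∧ r ≤ p - 1 ∧ ∀ n, 1 ≤ n → ((W n).eval c = 0 ↔ n % p = r) := by
  set w : ℕ → ℂ := fun n ↦ (W n).eval c
  have hw0 : w 0 = 1 := by simp [w, hW0]
  have hwrec : ∀ n, w (n + 2) = A.eval c * w (n + 1) + B.eval c * w n := fun n ↦ by
    simp [w, hrec (n + 2) (by omega)]
  obtain ⟨i, j, hij, hi, hj⟩ := hcommon
  have hs0 := sqrt_discr_ne_zero_of_two_zeros hwrec hw0 hB hs hij hi hj
  have hzero : ∀ n, w n = 0 ↔ v ^ n = u := by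
    rw [hu, hv]
    exact linRec_eq_zero_iff_pow_eq hwrec hw0 hB hs hs0 hi
  have hu1 : u ≠ 1 := fun h ↦ one_ne_zero ((hzero 0).2 (by rw [h, pow_zero]) ▸ hw0).symm
  obtain ⟨hp2, hrp, hmod⟩ := pow_eq_iff_mod_eq_of_minimal hp hr hu1
  exact ⟨hp2, hr.1, by omega, fun n _ ↦ (hzero n).trans (hmod n)⟩
end

section
/- Let (W_n) be a normalized recursive polynomial sequence of order two. The set of indices n such that W_n(c) = 0, for a common zero c, forms an arithmetic progression (specifically, either all n ≥ 2 when B(c) = 0, or {n : n ≡ r (mod p)} for some integers 2 ≤ p and 1 ≤ r ≤ p−1 when B(c) ≠ 0). -/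
/-!
Evaluated at `c`, the sequence `w n = W_n(c)` satisfies `w (n + 2) = a w (n + 1) + b w n` with
`w 0 = 1`, where `a = A(c)`, `b = B(c)`.

If `b = 0` then `w (n + 1) = aⁿ w 1`, so a zero at a positive index forces `a = 0` or `w 1 = 0`.

If `b ≠ 0` the recurrence can be run backwards, so a solution is determined by any two consecutive
values. Hence two solutions vanishing at the same index are proportional; in particular, from its
first zero `s` on, `w` is a nonzero multiple of the Lucas sequence `U` (`U 0 = 0`, `U 1 = 1`).
The same argument applied to `U` itself shows that its zero set is periodic with period its first
positive zero `p`, so the zeros of `w` are `s + pℕ`. Finally `s < p`, since otherwise `w` would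
also vanish at `s - p`.
-/

theorem mod_eq_iff_le_and_dvd_sub {n p s : ℕ} (hs : s < p) :
    n % p = s ↔ s ≤ n ∧ p ∣ n - s := by
  refine ⟨fun h => ⟨h ▸ Nat.mod_le n p, ?_⟩, fun ⟨hsn, hpn⟩ => ?_⟩
  · exact (Nat.modEq_iff_dvd' (h ▸ Nat.mod_le n p)).mp ((Nat.mod_eq_of_lt hs).trans h.symm)
  · exact Eq.trans (Eq.symm ((Nat.modEq_iff_dvd' hsn).mpr hpn)) (Nat.mod_eq_of_lt hs)

namespace SecondOrderRec

variable {R : Type*} [CommRing R] {a b : R} {u v : ℕ → R}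

def IsSolution (a b : R) (u : ℕ → R) : Prop :=
  ∀ n, u (n + 2) = a * u (n + 1) + b * u n

def lucasU (a b : R) : ℕ → R
  | 0 => 0
  | 1 => 1
  | n + 2 => a * lucasU a b (n + 1) + b * lucasU a b n

theorem isSolution_lucasU (a b : R) : IsSolution a b (lucasU a b) := fun _ => rfl

theorem IsSolution.shift (hu : IsSolution a b u) (m : ℕ) : IsSolution a b (fun k => u (m + k)) :=
  fun n => hu (m + n)

theorem IsSolution.eq_zero_of_two_le [IsDomain R] (hu : IsSolution a 0 u) {i n : ℕ} (hi : i ≠ 0)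
    (hui : u i = 0) (hn : 2 ≤ n) : u n = 0 := by
  have hpow : ∀ n, u (n + 1) = a ^ n * u 1 := by
    intro n
    induction n with
    | zero => simp
    | succ k ih => rw [hu, ih]; ring
  obtain ⟨m, rfl⟩ := Nat.exists_eq_succ_of_ne_zero hi
  obtain ⟨k, rfl⟩ := Nat.exists_eq_add_of_le' hn
  rw [hpow] at hui ⊢
  rcases mul_eq_zero.mp hui with ha | hu1
  · simp [eq_zero_of_pow_eq_zero ha]
  · simp [hu1]

theorem lucasU_ne_zero [Nontrivial R] : lucasU a b ≠ 0 := fun h => one_ne_zero (congrFun h 1)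

section NonzeroB

variable [IsDomain R] (hb : b ≠ 0)
include hb

/-- Since `b ≠ 0`, two consecutive zeros propagate backwards as well as forwards. -/
theorem IsSolution.eq_zero_of_eq_zero_of_eq_zero (hu : IsSolution a b u) {m : ℕ} (hm : u m = 0)
    (hm' : u (m + 1) = 0) : u = 0 := by
  have hinit : u 0 = 0 ∧ u 1 = 0 := by
    induction m with
    | zero => exact ⟨hm, hm'⟩
    | succ j ih =>
      have hbj : b * u j = 0 := by linear_combination -(hu j) + hm' - a * hm
      exact ih ((mul_eq_zero.mp hbj).resolve_left hb) hm
  have hpair : ∀ n, u n = 0 ∧ u (n + 1) = 0 := by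
    intro n
    induction n with
    | zero => exact hinit
    | succ k ih => exact ⟨ih.2, by rw [hu, ih.1, ih.2]; ring⟩
  exact funext fun n => (hpair n).1

theorem IsSolution.mul_eq_mul_of_eq_zero (hu : IsSolution a b u) (hv : IsSolution a b v) {m : ℕ}
    (hum : u m = 0) (hvm : v m = 0) (k : ℕ) : u k * v (m + 1) = v k * u (m + 1) := by
  have hsol : IsSolution a b (fun k => u k * v (m + 1) - v k * u (m + 1)) := fun n => by
    simp only [hu n, hv n]; ring
  have h := hsol.eq_zero_of_eq_zero_of_eq_zero hb (m := m) (by simp [hum, hvm]) (by ring)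
  exact sub_eq_zero.mp (congrFun h k)

theorem IsSolution.shift_eq_zero_iff (hu : IsSolution a b u) (hu0 : u ≠ 0) {s : ℕ}
    (hs : u s = 0) (k : ℕ) : u (s + k) = 0 ↔ lucasU a b k = 0 := by
  have hs1 : u (s + 1) ≠ 0 := fun h => hu0 (hu.eq_zero_of_eq_zero_of_eq_zero hb hs h)
  have h := (hu.shift s).mul_eq_mul_of_eq_zero hb (isSolution_lucasU a b) (m := 0) hs rfl k
  simp only [lucasU, mul_one, zero_add] at h
  rw [h, mul_eq_zero, or_iff_left hs1]

theorem lucasU_eq_zero_iff_dvd {p : ℕ} (hp0 : 0 < p) (hp : lucasU a b p = 0)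
    (hmin : ∀ k, 0 < k → k < p → lucasU a b k ≠ 0) (k : ℕ) :
    lucasU a b k = 0 ↔ p ∣ k := by
  have hper : Function.Periodic (fun k => lucasU a b k = 0) p := fun k => by
    simpa only [add_comm k, eq_iff_iff] using
      (isSolution_lucasU a b).shift_eq_zero_iff hb lucasU_ne_zero hp k
  rw [← hper.map_mod_nat, Nat.dvd_iff_mod_eq_zero]
  exact ⟨fun h => by_contra fun h0 => hmin _ (Nat.pos_of_ne_zero h0) (Nat.mod_lt k hp0) h,
    fun h => by simp only [h, lucasU]⟩

theorem IsSolution.eq_zero_sub_of_lucasU_eq_zero (hu : IsSolution a b u) {s p : ℕ} (hs : u s = 0)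
    (hp : lucasU a b p = 0) (hps : p ≤ s) : u (s - p) = 0 := by
  have hp1 : lucasU a b (p + 1) ≠ 0 := fun h =>
    lucasU_ne_zero ((isSolution_lucasU a b).eq_zero_of_eq_zero_of_eq_zero hb hp h)
  have h := (hu.shift (s - p)).mul_eq_mul_of_eq_zero hb (isSolution_lucasU a b)
    (by rwa [Nat.sub_add_cancel hps]) hp 0
  simp only [add_zero, lucasU, zero_mul] at h
  exact (mul_eq_zero.mp h).resolve_right hp1

theorem IsSolution.exists_eq_zero_iff_mod_eq (hu : IsSolution a b u) (hu0 : u 0 ≠ 0) {i j : ℕ}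
    (hij : i ≠ j) (hi : u i = 0) (hj : u j = 0) :
    ∃ p r : ℕ, 2 ≤ p ∧ 1 ≤ r ∧ r ≤ p - 1 ∧ ∀ n, u n = 0 ↔ n % p = r := by
  classical
  have hex : ∃ n, u n = 0 := ⟨i, hi⟩
  set s := Nat.find hex
  have hs : u s = 0 := Nat.find_spec hex
  have hs0 : s ≠ 0 := fun h => hu0 (h ▸ hs)
  have hzero : ∀ k, u (s + k) = 0 ↔ lucasU a b k = 0 :=
    hu.shift_eq_zero_iff hb (fun h => hu0 (congrFun h 0)) hs
  have hexU : ∃ k, 0 < k ∧ lucasU a b k = 0 := by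
    obtain ⟨t, hts, ht⟩ : ∃ t, t ≠ s ∧ u t = 0 := by
      rcases eq_or_ne i s with rfl | his
      exacts [⟨j, hij.symm, hj⟩, ⟨i, his, hi⟩]
    have hst : s < t := lt_of_le_of_ne (Nat.find_min' hex ht) hts.symm
    refine ⟨t - s, by omega, (hzero _).mp ?_⟩
    rwa [Nat.add_sub_cancel' hst.le]
  set p := Nat.find hexU
  obtain ⟨hp0, hp⟩ : 0 < p ∧ lucasU a b p = 0 := Nat.find_spec hexU
  have hdvd := lucasU_eq_zero_iff_dvd hb hp0 hp fun k hk hkp h => Nat.find_min hexU hkp ⟨hk, h⟩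
  have hsp : s < p := by
    by_contra! hps
    exact Nat.find_min hex (by omega : s - p < s)
      (hu.eq_zero_sub_of_lucasU_eq_zero hb hs hp hps)
  refine ⟨p, s, by omega, by omega, by omega, fun n => ?_⟩
  rw [mod_eq_iff_le_and_dvd_sub hsp, ← hdvd]
  refine ⟨fun hn => ⟨Nat.find_min' hex hn, ?_⟩, fun ⟨hsn, hn⟩ => ?_⟩
  · rwa [← hzero, Nat.add_sub_cancel' (Nat.find_min' hex hn)]
  · rwa [← hzero, Nat.add_sub_cancel' hsn] at hn

end NonzeroB

end SecondOrderRec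

open SecondOrderRec Polynomial in
theorem isSolution_eval {A B : ℂ[X]} {W : ℕ → ℂ[X]}
    (hrec : ∀ n, 2 ≤ n → W n = A * W (n - 1) + B * W (n - 2)) (c : ℂ) :
    IsSolution (A.eval c) (B.eval c) (fun n => (W n).eval c) := fun n => by
  simp [hrec (n + 2) (by omega)]

theorem stmt_9 (A B : Polynomial ℂ) (W : ℕ → Polynomial ℂ) (hW0 : W 0 = 1)
    (hrec : ∀ n, 2 ≤ n → W n = A * W (n - 1) + B * W (n - 2))
    (c : ℂ)
    (hcommon : ∃ i j : ℕ, i ≠ j ∧ (W i).eval c = 0 ∧ (W j).eval c = 0) :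
    (B.eval c = 0 ∧ ∀ n, 2 ≤ n → (W n).eval c = 0) ∨
    (B.eval c ≠ 0 ∧ ∃ p r : ℕ, 2 ≤ p ∧ 1 ≤ r ∧ r ≤ p - 1 ∧
      ∀ n, 1 ≤ n → ((W n).eval c = 0 ↔ n % p = r)) := by
  have hsol := isSolution_eval hrec c
  have hw0 : (W 0).eval c ≠ 0 := by simp [hW0]
  obtain ⟨i, j, hij, hi, hj⟩ := hcommon
  by_cases hb : B.eval c = 0
  · rw [hb] at hsol
    exact .inl ⟨hb, fun n hn => hsol.eq_zero_of_two_le (by rintro rfl; exact hw0 hi) hi hn⟩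
  · obtain ⟨p, r, hp, hr, hrp, hzero⟩ := hsol.exists_eq_zero_iff_mod_eq hb hw0 hij hi hj
    exact .inr ⟨hb, p, r, hp, hr, hrp, fun n _ => hzero n⟩
end

section
/- Let c ∈ ℂ with B(c) ≠ 0 and Δ(c) ≠ 0, and let v = (A(c)+√Δ(c))/(A(c)−√Δ(c)). Then |v| = 1 if and only if A(c)² = x·B(c) for some real x with −4 < x ≤ 0. -/
/-!
Write `a = A(c)`, `b = B(c)`, `s = √Δ(c)`. Since `(a - s)(a + s) = -4b ≠ 0`, `|v| = 1` means
`|a + s| = |a - s|`, i.e. `a / s` is purely imaginary, i.e. `a² = r s² = r (a² + 4b)` for some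
real `r ≤ 0`. Solving for `a²` gives `a² = x b` with `x = 4r / (1 - r)`, and this Möbius map
sends `(-∞, 0]` onto `(-4, 0]`.
-/

namespace Complex

theorem norm_add_one_eq_norm_sub_one_iff (z : ℂ) : ‖z + 1‖ = ‖z - 1‖ ↔ z.re = 0 := by
  rw [← sq_eq_sq₀ (norm_nonneg _) (norm_nonneg _), Complex.sq_norm, Complex.sq_norm,
    normSq_add, normSq_sub]
  simp only [map_one, mul_one]
  constructor <;> intro h <;> linarith

theorem norm_add_eq_norm_sub_iff_re_div {a s : ℂ} (hs : s ≠ 0) :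
    ‖a + s‖ = ‖a - s‖ ↔ (a / s).re = 0 := by
  rw [show a + s = (a / s + 1) * s by field_simp, show a - s = (a / s - 1) * s by field_simp,
    norm_mul, norm_mul, mul_left_inj' (norm_ne_zero_iff.mpr hs),
    norm_add_one_eq_norm_sub_one_iff]

theorem re_eq_zero_iff_exists_sq_eq_ofReal_nonpos (z : ℂ) :
    z.re = 0 ↔ ∃ r : ℝ, r ≤ 0 ∧ z ^ 2 = r := by
  constructor
  · intro h
    refine ⟨-z.im ^ 2, by nlinarith, ?_⟩
    apply Complex.ext <;> simp [pow_two, h]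
  · rintro ⟨r, hr, hzr⟩
    have hre : z.re * z.re - z.im * z.im = r := by simpa [pow_two] using congrArg re hzr
    have him : z.re * z.im + z.im * z.re = 0 := by simpa [pow_two] using congrArg im hzr
    rcases mul_eq_zero.mp (by linarith : z.re * z.im = 0) with h | h
    · exact h
    · nlinarith

theorem re_div_eq_zero_iff {a s : ℂ} (hs : s ≠ 0) :
    (a / s).re = 0 ↔ ∃ r : ℝ, r ≤ 0 ∧ a ^ 2 = r * s ^ 2 := by
  simp only [re_eq_zero_iff_exists_sq_eq_ofReal_nonpos, div_pow,
    div_eq_iff (pow_ne_zero 2 hs)]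

end Complex

theorem exists_sq_eq_mul_discr_iff {a b : ℂ} :
    (∃ r : ℝ, r ≤ 0 ∧ a ^ 2 = r * (a ^ 2 + 4 * b)) ↔
      ∃ x : ℝ, -4 < x ∧ x ≤ 0 ∧ a ^ 2 = x * b := by
  constructor
  · rintro ⟨r, hr, h⟩
    have h1r : (0 : ℝ) < 1 - r := by linarith
    refine ⟨4 * r / (1 - r), by rw [lt_div_iff₀ h1r]; linarith,
      div_nonpos_of_nonpos_of_nonneg (by linarith) h1r.le, ?_⟩
    have hc : (1 : ℂ) - r ≠ 0 := by exact_mod_cast h1r.ne'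
    push_cast
    rw [div_mul_eq_mul_div, eq_div_iff hc]
    linear_combination h
  · rintro ⟨x, hx4, hx0, h⟩
    have hx4' : (0 : ℝ) < x + 4 := by linarith
    refine ⟨x / (x + 4), div_nonpos_of_nonpos_of_nonneg hx0 hx4'.le, ?_⟩
    have hc : (x : ℂ) + 4 ≠ 0 := by exact_mod_cast hx4'.ne'
    push_cast
    rw [div_mul_eq_mul_div, eq_div_iff hc]
    linear_combination 4 * h

theorem stmt_11 (A B : Polynomial ℂ) (c s : ℂ) (hB : B.eval c ≠ 0)
    (hΔ : A.eval c ^ 2 + 4 * B.eval c ≠ 0)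
    (hs : s ^ 2 = A.eval c ^ 2 + 4 * B.eval c) :
    ‖(A.eval c + s) / (A.eval c - s)‖ = 1 ↔
      ∃ x : ℝ, -4 < x ∧ x ≤ 0 ∧ A.eval c ^ 2 = x * B.eval c := by
  set a := A.eval c
  set b := B.eval c
  have hs0 : s ≠ 0 := by rintro rfl; exact hΔ (by rw [← hs]; ring)
  have hds : a - s ≠ 0 := by
    intro h
    exact hB (by linear_combination (-(a + s) * h - hs) / 4)
  rw [norm_div, div_eq_one_iff_eq (norm_ne_zero_iff.mpr hds),
    Complex.norm_add_eq_norm_sub_iff_re_div hs0, Complex.re_div_eq_zero_iff hs0, hs,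
    exists_sq_eq_mul_discr_iff]
end

section
/- Suppose W_0(z) = 1, W_1(z) = z, and W_n(z) = (z² + (1−√3)z + 1)·W_{n-1}(z) − (z²/2)·W_{n-2}(z) for n ≥ 2. Then for c = e^{πi/6} and n ≥ 0, W_n(c) = 0 if and only if n ≡ 3 (mod 4). -/
open Polynomial in
theorem stmt_14 (W : ℕ → Polynomial ℂ) (hW0 : W 0 = 1) (hW1 : W 1 = X)
    (hrec : ∀ n, 2 ≤ n →
      W n = (X ^ 2 + Polynomial.C (1 - (Real.sqrt 3 : ℂ)) * X + 1) * W (n - 1)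
              - Polynomial.C (1 / 2 : ℂ) * X ^ 2 * W (n - 2)) :
    ∀ n : ℕ, (W n).eval (Complex.exp (Real.pi * Complex.I / 6)) = 0 ↔ n % 4 = 3 := by
  set c : ℂ := Complex.exp (Real.pi * Complex.I / 6) with hcdef
  have hcne : c ≠ 0 := Complex.exp_ne_zero _
  have hcval : c = ((Real.sqrt 3 : ℂ) + Complex.I) / 2 := by
    have h1 : (Real.pi : ℂ) * Complex.I / 6 = ((Real.pi / 6 : ℝ) : ℂ) * Complex.I := by
      push_cast; ring
    rw [hcdef, h1, Complex.exp_mul_I]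
    rw [← Complex.ofReal_cos, ← Complex.ofReal_sin, Real.cos_pi_div_six, Real.sin_pi_div_six]
    push_cast; ring
  have hA : c ^ 2 + (1 - (Real.sqrt 3 : ℂ)) * c + 1 = c := by
    have hs : ((Real.sqrt 3 : ℂ)) ^ 2 = 3 := by
      norm_cast
      rw [Real.sq_sqrt] <;> norm_num
    have hI : Complex.I ^ 2 = -1 := Complex.I_sq
    rw [hcval]
    linear_combination (-(1 : ℂ)/4) * hs + (1/4 : ℂ) * hI
  have hrec' : ∀ n : ℕ, (W (n+2)).eval c = c * (W (n+1)).eval c - c ^ 2 / 2 * (W n).eval c := by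
    intro n
    have h := hrec (n+2) (by omega)
    have h1 : n + 2 - 1 = n + 1 := rfl
    have h2 : n + 2 - 2 = n := rfl
    rw [h1, h2] at h
    rw [h]
    simp only [Polynomial.eval_sub, Polynomial.eval_mul, Polynomial.eval_add,
      Polynomial.eval_pow, Polynomial.eval_X, Polynomial.eval_C, Polynomial.eval_one]
    linear_combination ((W (n+1)).eval c) * hA
  have hper : ∀ n : ℕ, (W (n+4)).eval c = -(c ^ 4 / 4) * (W n).eval c := by
    intro n
    have e2 := hrec' n
    have e3 := hrec' (n+1)
    have e4 := hrec' (n+2)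
    rw [show n+2+2 = n+4 from rfl, show n+2+1 = n+3 from rfl] at e4
    rw [show n+1+2 = n+3 from rfl, show n+1+1 = n+2 from rfl] at e3
    rw [e4, e3, e2]; ring
  have w0 : (W 0).eval c = 1 := by simp [hW0]
  have w1 : (W 1).eval c = c := by simp [hW1]
  have w2 : (W 2).eval c = c ^ 2 / 2 := by
    have := hrec' 0
    rw [w0, w1] at this
    rw [this]; ring
  have w3 : (W 3).eval c = 0 := by
    have := hrec' 1
    rw [w1, w2] at this
    rw [this]; ring
  intro n
  induction n using Nat.strong_induction_on with
  | _ n ih =>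
    match n, ih with
    | 0, _ => simp [w0]
    | 1, _ => simp [w1, hcne]
    | 2, _ => simp [w2, hcne]
    | 3, _ => simp [w3]
    | (m+4), ih =>
      have key := ih m (by omega)
      rw [hper m]
      have hc4 : -(c ^ 4 / 4) ≠ 0 := by
        simp [pow_ne_zero _ hcne]
      rw [mul_eq_zero]
      simp [hc4, key]
end

section
/- Suppose W_0(z) = 1, W_1(z) = z, and W_n(z) = (4z² + 1)·W_{n-1}(z) + e^{−2πi/3}·z·W_{n-2}(z) for n ≥ 2. Then for c = e^{πi/3}/2 and n ≥ 0, W_n(c) = 0 if and only if n ≡ 2 (mod 4). -/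
/-! With `ω = exp(πi/3)` and `c = ω/2`, the identities `ω² = ω - 1` and `exp(-2πi/3) = -ω`
turn the values `w n = W_n(c)` into a solution of `w (n+2) = ω w (n+1) - (ω²/2) w n`. Its
characteristic roots `ω(1 ± i)/2` have the common fourth power `-ω⁴/4 ≠ 0`, so
`w (n+4) = -ω⁴/4 · w n` and `w n` vanishes exactly when `w (n % 4)` does; finally
`w 0, …, w 3 = 1, ω/2, 0, -ω³/4`. -/

theorem add_four_eq_neg_sq_mul {R : Type*} [CommRing R] {a b : R} {w : ℕ → R}
    (hab : a ^ 2 + 2 * b = 0) (hw : ∀ n, w (n + 2) = a * w (n + 1) + b * w n) (n : ℕ) :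
    w (n + 4) = -b ^ 2 * w n := by
  have h3 := hw (n + 1)
  have h4 := hw (n + 2)
  rw [hw n] at h3
  rw [h3, hw n] at h4
  linear_combination h4 + (a * w (n + 1) + b * w n) * hab

section QuasiPeriodic

variable {M : Type*} [MonoidWithZero M] {w : ℕ → M} {k : M} {p : ℕ}

theorem eq_pow_div_mul_mod (hw : ∀ n, w (n + p) = k * w n) (n : ℕ) :
    w n = k ^ (n / p) * w (n % p) := by
  suffices ∀ q r, w (r + p * q) = k ^ q * w r by
    simpa [Nat.mod_add_div] using this (n / p) (n % p)
  intro q r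
  induction q with
  | zero => simp
  | succ q ih => rw [Nat.mul_succ, ← add_assoc, hw, ih, pow_succ', mul_assoc]

theorem eq_zero_iff_mod_eq_zero [NoZeroDivisors M] (hk : k ≠ 0)
    (hw : ∀ n, w (n + p) = k * w n) (n : ℕ) :
    w n = 0 ↔ w (n % p) = 0 := by
  rw [eq_pow_div_mul_mod hw, mul_eq_zero, or_iff_right (pow_ne_zero _ hk)]

end QuasiPeriodic

open Complex in
theorem exp_pi_div_three_mul_I_sq :
    exp (Real.pi * I / 3) ^ 2 = exp (Real.pi * I / 3) - 1 := by
  have hs : ((Real.sqrt 3 : ℝ) : ℂ) ^ 2 = 3 := by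
    exact_mod_cast Real.sq_sqrt (by norm_num : (0 : ℝ) ≤ 3)
  rw [show Real.pi * I / 3 = (Real.pi / 3 : ℝ) * I by push_cast; ring, exp_mul_I, ← ofReal_cos,
    ← ofReal_sin, Real.cos_pi_div_three, Real.sin_pi_div_three]
  push_cast
  linear_combination (I ^ 2 / 4) * hs + (3 / 4) * I_sq

open Complex in
theorem exp_neg_two_pi_div_three_mul_I :
    exp (-2 * Real.pi * I / 3) = -exp (Real.pi * I / 3) := by
  rw [show -2 * Real.pi * I / 3 = Real.pi * I / 3 - Real.pi * I by ring, exp_sub,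
    exp_pi_mul_I, div_neg, div_one]

open Polynomial in
theorem stmt_15 (W : ℕ → Polynomial ℂ) (hW0 : W 0 = 1) (hW1 : W 1 = X)
    (hrec : ∀ n, 2 ≤ n →
      W n = (4 * X ^ 2 + 1) * W (n - 1)
              + Polynomial.C (Complex.exp (-2 * Real.pi * Complex.I / 3)) * X * W (n - 2)) :
    ∀ n : ℕ, (W n).eval (Complex.exp (Real.pi * Complex.I / 3) / 2) = 0 ↔ n % 4 = 2 := by
  set ω := Complex.exp (Real.pi * Complex.I / 3)
  set w : ℕ → ℂ := fun n ↦ (W n).eval (ω / 2)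
  have hω : ω ≠ 0 := Complex.exp_ne_zero _
  have hw : ∀ n, w (n + 2) = ω * w (n + 1) + -(ω ^ 2 / 2) * w n := by
    intro n
    simp only [w, hrec (n + 2) le_add_self, Nat.add_succ_sub_one, add_tsub_cancel_right, eval_add,
      eval_mul, eval_pow, eval_C, eval_X, eval_one, eval_ofNat, exp_neg_two_pi_div_three_mul_I]
    linear_combination w (n + 1) * exp_pi_div_three_mul_I_sq
  have hquasi := add_four_eq_neg_sq_mul (by ring) hw
  intro n
  rw [eq_zero_iff_mod_eq_zero (by simpa using hω) hquasi]
  have hn : n % 4 < 4 := Nat.mod_lt n (by norm_num)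
  interval_cases n % 4
  · simp [w, hW0]
  · simp [w, hW1, hω]
  · simp only [hw 0, w, hW0, hW1, eval_one, eval_X, iff_true]
    ring
  · simp only [hw 1, hw 0, w, hW0, hW1, eval_one, eval_X]
    ring_nf
    simp [hω]
end

section
/- Suppose A(z), B(z), W_1(z) have real coefficients, and let c ∈ ℝ with B(c) ≠ 0. Then c is a common zero of (W_n) if and only if either (a) Δ(c) > 0, A(c) = 0, and W_n(c) = 0 exactly when n is odd, or (b) Δ(c) < 0 and Arg(u), Arg(v) ∈ ℚπ with p*(u) | p*(v). -/
/-!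
If `x ≠ y` are the roots of `X² - aX - b` (`a = A(c)`, `b = B(c)`), then
`W_n(c) (x - y) = (W_1(c) - y) xⁿ - (W_1(c) - x) yⁿ`, so the zeros are the `n` with `vⁿ = u`,
and two zeros make `v` a root of unity. For `Δ > 0` the roots are real, so `x/y = -1`, i.e.
`a = 0`, and `W_{n+2} = b W_n` gives the parity pattern. For `Δ < 0` the roots are complex
conjugate, so `|u| = |v| = 1`, and `u` is a power of the root of unity `v` exactly when the order
of `u` (the denominator of `Arg u / 2π`) divides that of `v`. For `Δ = 0` the double root
`r = a/2` gives `W_n(c) r = (r + n (W_1(c) - r)) rⁿ`, which vanishes for at most one `n`.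
-/

open Complex ComplexConjugate
open scoped Real

section Recurrence

variable {R : Type*} [CommRing R] {a b x y r : R} {w : ℕ → R}

theorem eq_of_recurrence {f g : ℕ → R} (hf : ∀ n, f (n + 2) = a * f (n + 1) + b * f n)
    (hg : ∀ n, g (n + 2) = a * g (n + 1) + b * g n) (h0 : f 0 = g 0) (h1 : f 1 = g 1) :
    f = g := by
  have key : ∀ n, f n = g n ∧ f (n + 1) = g (n + 1) := by
    intro n
    induction n with
    | zero => exact ⟨h0, h1⟩
    | succ n ih => exact ⟨ih.2, by rw [hf, hg, ih.1, ih.2]⟩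
  exact funext fun n => (key n).1

theorem mul_sub_eq_of_recurrence (hw0 : w 0 = 1)
    (hw : ∀ n, w (n + 2) = a * w (n + 1) + b * w n) (hsum : x + y = a) (hprod : x * y = -b)
    (n : ℕ) : w n * (x - y) = (w 1 - y) * x ^ n - (w 1 - x) * y ^ n := by
  refine congrFun (eq_of_recurrence (a := a) (b := b) (f := fun n => w n * (x - y))
    (g := fun n => (w 1 - y) * x ^ n - (w 1 - x) * y ^ n) (fun n => by simp only [hw]; ring)
    (fun n => ?_) (by simp [hw0]) (by ring)) n
  subst hsum
  linear_combination ((w 1 - x) * y ^ n - (w 1 - y) * x ^ n) * hprod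

theorem mul_eq_of_recurrence_of_double_root (hw0 : w 0 = 1)
    (hw : ∀ n, w (n + 2) = a * w (n + 1) + b * w n) (hsum : r + r = a) (hprod : r * r = -b)
    (n : ℕ) : w n * r = (r + n * (w 1 - r)) * r ^ n := by
  refine congrFun (eq_of_recurrence (a := a) (b := b) (f := fun n => w n * r)
    (g := fun n => (r + n * (w 1 - r)) * r ^ n) (fun n => by simp only [hw]; ring)
    (fun n => ?_) (by simp [hw0]) (by simp)) n
  subst hsum
  push_cast
  linear_combination (-(r + n * (w 1 - r)) * r ^ n) * hprod

theorem apply_two_mul_add (hw : ∀ n, w (n + 2) = b * w n) (m k : ℕ) :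
    w (2 * m + k) = b ^ m * w k := by
  induction m with
  | zero => simp
  | succ m ih => rw [show 2 * (m + 1) + k = 2 * m + k + 2 by ring, hw, ih, pow_succ]; ring

variable [IsDomain R]

theorem eq_pow_of_apply_one_eq (hw0 : w 0 = 1)
    (hw : ∀ n, w (n + 2) = a * w (n + 1) + b * w n) (hsum : x + y = a) (hprod : x * y = -b)
    (hxy : x ≠ y) (hw1 : w 1 = y) (n : ℕ) : w n = y ^ n := by
  have h := mul_sub_eq_of_recurrence hw0 hw hsum hprod n
  rw [hw1, sub_self, zero_mul, zero_sub, ← neg_mul, neg_sub] at h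
  exact mul_right_cancel₀ (sub_ne_zero.mpr hxy) (h.trans (mul_comm _ _))

theorem eq_zero_iff_odd (hw0 : w 0 = 1) (hw : ∀ n, w (n + 2) = b * w n) (hb : b ≠ 0)
    {i : ℕ} (hi : w i = 0) (n : ℕ) : w n = 0 ↔ Odd n := by
  have hmod : ∀ n, w n = 0 ↔ w (n % 2) = 0 := fun n => by
    conv_lhs => rw [← Nat.div_add_mod n 2, apply_two_mul_add hw]
    exact mul_eq_zero_iff_left (pow_ne_zero _ hb)
  have hw1 : w 1 = 0 := by
    rcases Nat.mod_two_eq_zero_or_one i with h | h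
    · exact absurd ((hmod i).mp hi) (by rw [h, hw0]; exact one_ne_zero)
    · rwa [hmod, h] at hi
  rw [hmod, Nat.odd_iff]
  rcases Nat.mod_two_eq_zero_or_one n with h | h <;> simp [h, hw0, hw1]

end Recurrence

theorem exists_pow_eq_one_of_pow_eq_pow {G₀ : Type*} [GroupWithZero G₀] {v : G₀} (hv : v ≠ 0)
    {i j : ℕ} (hij : i ≠ j) (h : v ^ i = v ^ j) : ∃ k, 0 < k ∧ v ^ k = 1 := by
  rcases hij.lt_or_gt with hlt | hlt
  · exact ⟨j - i, by omega, by rw [pow_sub₀ v hv hlt.le, h, mul_inv_cancel₀ (pow_ne_zero j hv)]⟩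
  · exact ⟨i - j, by omega, by rw [pow_sub₀ v hv hlt.le, h, mul_inv_cancel₀ (pow_ne_zero j hv)]⟩

section Field

variable {K : Type*} [Field K] {a b x y : K} {w : ℕ → K}

theorem eq_zero_iff_div_pow_eq (hw0 : w 0 = 1)
    (hw : ∀ n, w (n + 2) = a * w (n + 1) + b * w n) (hsum : x + y = a) (hprod : x * y = -b)
    (hxy : x ≠ y) (hy : y ≠ 0) (hw1 : w 1 ≠ y) (n : ℕ) :
    w n = 0 ↔ (x / y) ^ n = (w 1 - x) / (w 1 - y) := by
  rw [div_pow, div_eq_div_iff (pow_ne_zero n hy) (sub_ne_zero.mpr hw1),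
    ← mul_eq_zero_iff_right (sub_ne_zero.mpr hxy), mul_sub_eq_of_recurrence hw0 hw hsum hprod,
    sub_eq_zero, mul_comm (w 1 - y), mul_comm (w 1 - x)]

theorem eq_of_discr_eq_zero [CharZero K] (hw0 : w 0 = 1)
    (hw : ∀ n, w (n + 2) = a * w (n + 1) + b * w n) (hb : b ≠ 0) (hd : a ^ 2 + 4 * b = 0)
    {i j : ℕ} (hi : w i = 0) (hj : w j = 0) : i = j := by
  set r := a / 2
  have hprod : r * r = -b := by linear_combination hd / 4
  have hr : r ≠ 0 := fun h => hb (by simpa [h] using hprod.symm)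
  have hlin : ∀ n, w n = 0 → r + n * (w 1 - r) = 0 := fun n hn => by
    have h := mul_eq_of_recurrence_of_double_root hw0 hw (add_halves a) hprod n
    rwa [hn, zero_mul, eq_comm, mul_eq_zero_iff_right (pow_ne_zero n hr)] at h
  have hw1 : w 1 - r ≠ 0 := fun h => hr (by simpa [h] using hlin i hi)
  have hij : (i : K) * (w 1 - r) = j * (w 1 - r) := by linear_combination hlin i hi - hlin j hj
  exact_mod_cast mul_right_cancel₀ hw1 hij

end Field

theorem eq_zero_of_discr_pos {a b : ℝ} {w : ℕ → ℝ} (hw0 : w 0 = 1)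
    (hw : ∀ n, w (n + 2) = a * w (n + 1) + b * w n) (hb : b ≠ 0) (hd : 0 < a ^ 2 + 4 * b)
    {i j : ℕ} (hij : i ≠ j) (hi : w i = 0) (hj : w j = 0) : a = 0 := by
  set s := √(a ^ 2 + 4 * b)
  have hsq : s ^ 2 = a ^ 2 + 4 * b := Real.sq_sqrt hd.le
  have hsum : (a + s) / 2 + (a - s) / 2 = a := by ring
  have hprod : (a + s) / 2 * ((a - s) / 2) = -b := by linear_combination (-1 / 4 : ℝ) * hsq
  have hxy : (a + s) / 2 ≠ (a - s) / 2 := fun h => (Real.sqrt_pos.mpr hd).ne' (by linarith)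
  have hy : (a - s) / 2 ≠ 0 := right_ne_zero_of_mul (hprod ▸ neg_ne_zero.mpr hb)
  have hw1 : w 1 ≠ (a - s) / 2 := fun h => pow_ne_zero i hy <|
    (eq_pow_of_apply_one_eq hw0 hw hsum hprod hxy h i).symm.trans hi
  have hzero := eq_zero_iff_div_pow_eq hw0 hw hsum hprod hxy hy hw1
  obtain ⟨k, hk, hpow⟩ := exists_pow_eq_one_of_pow_eq_pow (div_ne_zero (left_ne_zero_of_mul
    (hprod ▸ neg_ne_zero.mpr hb)) hy) hij (((hzero i).mp hi).trans ((hzero j).mp hj).symm)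
  rcases pow_eq_one_iff_cases.mp hpow with h | h | ⟨h, -⟩
  · omega
  · exact absurd ((div_eq_one_iff_eq hy).mp h) hxy
  · rw [div_eq_iff hy] at h
    linarith

theorem exists_ne_eq_zero_iff_of_discr_pos {a b : ℝ} {w : ℕ → ℝ} (hw0 : w 0 = 1)
    (hw : ∀ n, w (n + 2) = a * w (n + 1) + b * w n) (hb : b ≠ 0) (hd : 0 < a ^ 2 + 4 * b) :
    (∃ i j, i ≠ j ∧ w i = 0 ∧ w j = 0) ↔ a = 0 ∧ ∀ n, w n = 0 ↔ Odd n := by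
  constructor
  · rintro ⟨i, j, hij, hi, hj⟩
    have ha := eq_zero_of_discr_pos hw0 hw hb hd hij hi hj
    subst ha
    exact ⟨rfl, eq_zero_iff_odd hw0 (fun n => by simpa using hw n) hb hi⟩
  · rintro ⟨-, hodd⟩
    exact ⟨1, 3, by norm_num, (hodd 1).mpr odd_one, (hodd 3).mpr (by decide)⟩

/-- `Arg u, Arg v ∈ ℚπ` and `p*(u) ∣ p*(v)`: writing `arg z = 2πq/p` in lowest terms makes
`p = p*(z)`. -/
def ArgRatDenDvd (u v : ℂ) : Prop :=
  ∃ (pu pv : ℕ) (qu qv : ℤ), 0 < pu ∧ 0 < pv ∧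
    Int.gcd (pu : ℤ) qu = 1 ∧ Int.gcd (pv : ℤ) qv = 1 ∧
    arg u = 2 * qu * π / pu ∧ arg v = 2 * qv * π / pv ∧ pu ∣ pv

theorem exp_arg_mul_I_of_norm_eq_one {z : ℂ} (hz : ‖z‖ = 1) : exp (arg z * I) = z := by
  simpa [hz] using norm_mul_exp_arg_mul_I z

theorem exists_arg_eq_of_pow_eq_one {z : ℂ} {m : ℕ} (hm : 0 < m) (hz : z ^ m = 1) :
    ∃ (p : ℕ) (q : ℤ), 0 < p ∧ p ∣ m ∧ Int.gcd p q = 1 ∧ arg z = 2 * q * π / p := by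
  have hexp := exp_arg_mul_I_of_norm_eq_one (norm_eq_one_of_pow_eq_one hz hm.ne')
  rw [← hexp, ← exp_nat_mul, exp_eq_one_iff] at hz
  obtain ⟨k, hk⟩ := hz
  have hk' : arg z = 2 * π * (k / m : ℚ) := by
    have h : ((m * arg z : ℝ) : ℂ) = (2 * π * k : ℝ) :=
      mul_right_cancel₀ I_ne_zero (by push_cast; linear_combination hk)
    have hm' : (m : ℝ) ≠ 0 := by positivity
    have h' : (m : ℝ) * arg z = 2 * π * k := by exact_mod_cast h
    push_cast
    field_simp
    linear_combination h'
  set r : ℚ := k / m with hr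
  refine ⟨r.den, r.num, r.den_pos, ?_, ?_, ?_⟩
  · have h := Rat.den_dvd k m
    rw [Rat.divInt_eq_div, Int.cast_natCast, ← hr] at h
    exact_mod_cast h
  · rw [Int.gcd_comm]
    exact r.reduced
  · rw [hk', Rat.cast_def]
    ring

theorem isPrimitiveRoot_of_arg_eq {z : ℂ} (hz : ‖z‖ = 1) {p : ℕ} (hp : 0 < p) {q : ℤ}
    (hq : Int.gcd p q = 1) (h : arg z = 2 * q * π / p) : IsPrimitiveRoot z p := by
  have hz' : z = exp (2 * π * I / p) ^ q := by
    rw [← exp_int_mul, ← exp_arg_mul_I_of_norm_eq_one hz, h]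
    push_cast
    ring_nf
  rw [hz']
  exact (isPrimitiveRoot_exp p hp.ne').zpow_of_gcd_eq_one q (by rwa [Int.gcd_comm])

theorem exists_ne_pow_eq_iff_argRatDenDvd {u v : ℂ} (hu : ‖u‖ = 1) (hv : ‖v‖ = 1) :
    (∃ i j, i ≠ j ∧ v ^ i = u ∧ v ^ j = u) ↔ ArgRatDenDvd u v := by
  constructor
  · rintro ⟨i, j, hij, hi, hj⟩
    have hv0 : v ≠ 0 := norm_ne_zero_iff.mp (hv ▸ one_ne_zero)
    obtain ⟨k, hk, hvk⟩ := exists_pow_eq_one_of_pow_eq_pow hv0 hij (hi.trans hj.symm)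
    obtain ⟨pv, qv, hpv, -, hgv, hargv⟩ := exists_arg_eq_of_pow_eq_one hk hvk
    have hupv : u ^ pv = 1 := by
      rw [← hi, ← pow_mul, mul_comm, pow_mul,
        (isPrimitiveRoot_of_arg_eq hv hpv hgv hargv).pow_eq_one, one_pow]
    obtain ⟨pu, qu, hpu, hdvd, hgu, hargu⟩ := exists_arg_eq_of_pow_eq_one hpv hupv
    exact ⟨pu, pv, qu, qv, hpu, hpv, hgu, hgv, hargu, hargv, hdvd⟩
  · rintro ⟨pu, pv, qu, qv, hpu, hpv, hgu, hgv, hargu, hargv, hdvd⟩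
    have hvprim := isPrimitiveRoot_of_arg_eq hv hpv hgv hargv
    have hupv : u ^ pv = 1 := by
      obtain ⟨m, rfl⟩ := hdvd
      rw [pow_mul, (isPrimitiveRoot_of_arg_eq hu hpu hgu hargu).pow_eq_one, one_pow]
    have : NeZero pv := ⟨hpv.ne'⟩
    obtain ⟨n, -, hn⟩ := hvprim.eq_pow_of_pow_eq_one hupv
    exact ⟨n, n + pv, by omega, hn, by rw [pow_add, hn, hvprim.pow_eq_one, mul_one]⟩

theorem conj_eq_neg_of_sq_eq_neg {s : ℂ} {d : ℝ} (hd : d < 0) (hs : s ^ 2 = d) : conj s = -s := by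
  have hre : s.re * s.re - s.im * s.im = d := by simpa [sq] using congrArg re hs
  have him : s.re * s.im = 0 := by simpa [sq, mul_comm, ← two_mul] using congrArg im hs
  have hre0 : s.re = 0 := by
    by_contra h
    rw [(mul_eq_zero_iff_left h).mp him] at hre
    nlinarith [mul_self_nonneg s.re]
  apply Complex.ext <;> simp [hre0]

theorem norm_div_conj_eq_one {z : ℂ} (hz : z ≠ 0) : ‖z / conj z‖ = 1 := by
  rw [norm_div, norm_conj, div_self (norm_ne_zero_iff.mpr hz)]

theorem exists_ne_eq_zero_iff_of_discr_neg {a b : ℝ} {w : ℕ → ℝ} (hw0 : w 0 = 1)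
    (hw : ∀ n, w (n + 2) = a * w (n + 1) + b * w n) (hd : a ^ 2 + 4 * b < 0) {s : ℂ}
    (hs : s ^ 2 = (a : ℂ) ^ 2 + 4 * b) :
    (∃ i j, i ≠ j ∧ w i = 0 ∧ w j = 0) ↔
      ArgRatDenDvd ((2 * (w 1 : ℂ) - a - s) / 2 / ((2 * (w 1 : ℂ) - a + s) / 2))
        ((a + s) / (a - s)) := by
  have hsum : (a + s) / 2 + (a - s) / 2 = (a : ℂ) := by ring
  have hprod : (a + s) / 2 * ((a - s) / 2) = -(b : ℂ) := by linear_combination (-1 / 4 : ℂ) * hs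
  have hs0 : s ≠ 0 := by
    rintro rfl
    exact hd.ne (by exact_mod_cast (hs.symm.trans (zero_pow two_ne_zero)))
  have hxy : ((a : ℂ) + s) / 2 ≠ (a - s) / 2 := fun h => hs0 (by linear_combination h)
  have hb : (b : ℂ) ≠ 0 := ofReal_ne_zero.mpr (by nlinarith [sq_nonneg a])
  have hx : ((a : ℂ) + s) / 2 ≠ 0 := left_ne_zero_of_mul (hprod ▸ neg_ne_zero.mpr hb)
  have hy : ((a : ℂ) - s) / 2 ≠ 0 := right_ne_zero_of_mul (hprod ▸ neg_ne_zero.mpr hb)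
  have hconj : conj (((a : ℂ) + s) / 2) = (a - s) / 2 := by
    rw [map_div₀, map_add, conj_ofReal, conj_eq_neg_of_sq_eq_neg hd (by push_cast; exact hs),
      map_ofNat, sub_eq_add_neg]
  have hw1 : ∀ z : ℂ, conj z ≠ z → (w 1 : ℂ) ≠ z := fun z hz h => hz (h ▸ conj_ofReal _)
  have hconj_y : conj (((a : ℂ) - s) / 2) = (a + s) / 2 := by rw [← hconj, conj_conj]
  have hw1y : (w 1 : ℂ) ≠ (a - s) / 2 := hw1 _ (by rw [hconj_y]; exact hxy)
  have hw1x : (w 1 : ℂ) - (a + s) / 2 ≠ 0 :=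
    sub_ne_zero.mpr (hw1 _ (by rw [hconj]; exact hxy.symm))
  have hzero : ∀ n, w n = 0 ↔
      (((a : ℂ) + s) / 2 / ((a - s) / 2)) ^ n = (w 1 - (a + s) / 2) / (w 1 - (a - s) / 2) :=
    fun n => by
      rw [← ofReal_eq_zero]
      exact eq_zero_iff_div_pow_eq (w := fun n => (w n : ℂ)) (by simp [hw0])
        (fun n => by simp [hw]) hsum hprod hxy hy hw1y n
  have hu : (2 * (w 1 : ℂ) - a - s) / 2 / ((2 * (w 1 : ℂ) - a + s) / 2) =
      (w 1 - (a + s) / 2) / (w 1 - (a - s) / 2) := by ring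
  have hv : ((a : ℂ) + s) / (a - s) = (a + s) / 2 / ((a - s) / 2) :=
    (div_div_div_cancel_right₀ two_ne_zero _ _).symm
  have hconj' : conj ((w 1 : ℂ) - (a + s) / 2) = w 1 - (a - s) / 2 := by
    rw [map_sub, conj_ofReal, hconj]
  rw [hu, hv, ← exists_ne_pow_eq_iff_argRatDenDvd (hconj' ▸ norm_div_conj_eq_one hw1x)
    (hconj ▸ norm_div_conj_eq_one hx)]
  simp only [hzero]

theorem stmt_16 (A B : Polynomial ℝ) (W : ℕ → Polynomial ℝ) (hW0 : W 0 = 1)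
    (hrec : ∀ n, 2 ≤ n → W n = A * W (n - 1) + B * W (n - 2))
    (c : ℝ) (hB : B.eval c ≠ 0) :
    (∃ i j : ℕ, i ≠ j ∧ (W i).eval c = 0 ∧ (W j).eval c = 0) ↔
      ((A.eval c ^ 2 + 4 * B.eval c > 0 ∧ A.eval c = 0 ∧
          ∀ n : ℕ, ((W n).eval c = 0 ↔ Odd n)) ∨
       (A.eval c ^ 2 + 4 * B.eval c < 0 ∧
        (let Ac : ℂ := Complex.ofReal (A.eval c);
         let Bc : ℂ := Complex.ofReal (B.eval c);
         let W1c : ℂ := Complex.ofReal ((W 1).eval c);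
         let s : ℂ := (Ac ^ 2 + 4 * Bc) ^ ((1 : ℂ) / 2);
         let v : ℂ := (Ac + s) / (Ac - s);
         let u : ℂ := ((2 * W1c - Ac - s) / 2) / ((2 * W1c - Ac + s) / 2);
         ∃ (pu pv : ℕ) (qu qv : ℤ), 0 < pu ∧ 0 < pv ∧
           Int.gcd (pu : ℤ) qu = 1 ∧ Int.gcd (pv : ℤ) qv = 1 ∧
           Complex.arg u = 2 * qu * Real.pi / pu ∧
           Complex.arg v = 2 * qv * Real.pi / pv ∧
           pu ∣ pv))) := by
  have hw0 : (W 0).eval c = 1 := by simp [hW0]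
  have hw : ∀ n, (W (n + 2)).eval c = A.eval c * (W (n + 1)).eval c + B.eval c * (W n).eval c :=
    fun n => by simp [hrec (n + 2) (by omega)]
  rcases lt_trichotomy (A.eval c ^ 2 + 4 * B.eval c) 0 with hd | hd | hd
  · have hs : ((((A.eval c : ℝ) : ℂ) ^ 2 + 4 * (B.eval c : ℝ)) ^ ((1 : ℂ) / 2)) ^ 2 =
        ((A.eval c : ℝ) : ℂ) ^ 2 + 4 * (B.eval c : ℝ) := by
      rw [one_div]
      exact_mod_cast cpow_nat_inv_pow _ two_ne_zero
    refine (exists_ne_eq_zero_iff_of_discr_neg (w := fun n => (W n).eval c) hw0 hw hd hs).trans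
      ⟨fun h => .inr ⟨hd, h⟩, fun h => (h.resolve_left fun h' => h'.1.not_gt hd).2⟩
  · refine iff_of_false (fun ⟨i, j, hij, hi, hj⟩ => hij ?_)
      (by rintro (⟨h, -⟩ | ⟨h, -⟩) <;> linarith)
    exact eq_of_discr_eq_zero (w := fun n => (W n).eval c) hw0 hw hB hd hi hj
  · refine (exists_ne_eq_zero_iff_of_discr_pos (w := fun n => (W n).eval c) hw0 hw hB hd).trans
      ⟨fun h => .inl ⟨hd, h⟩, fun h => (h.resolve_right fun h' => h'.1.not_gt hd).2⟩
end

section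
/- Suppose A, B, W_1 have real coefficients and c ∈ ℝ is a common zero of (W_n) with A(c)·B(c) ≠ 0 and A(c) − 2W_1(c) ≠ 0. Let r ≥ 1 be minimal with W_r(c) = 0 and θ ∈ (0, π) with tan θ = √(−Δ(c))/A(c). Then tan(rθ) = √(−Δ(c))/(A(c) − 2W_1(c)). -/
theorem stmt_18 (A B : Polynomial ℝ) (W : ℕ → Polynomial ℝ) (hW0 : W 0 = 1)
    (hrec : ∀ n, 2 ≤ n → W n = A * W (n - 1) + B * W (n - 2))
    (c : ℝ)
    (hcommon : ∃ i j : ℕ, i ≠ j ∧ (W i).eval c = 0 ∧ (W j).eval c = 0)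
    (hAB : A.eval c * B.eval c ≠ 0)
    (hAW : A.eval c - 2 * (W 1).eval c ≠ 0)
    (r : ℕ) (hr : 0 < r ∧ (W r).eval c = 0 ∧ ∀ m, 0 < m → (W m).eval c = 0 → r ≤ m)
    (θ : ℝ) (hθ : θ ∈ Set.Ioo 0 Real.pi)
    (htan : Real.tan θ = Real.sqrt (-(A.eval c ^ 2 + 4 * B.eval c)) / A.eval c) :
    Real.tan (r * θ) =
      Real.sqrt (-(A.eval c ^ 2 + 4 * B.eval c)) / (A.eval c - 2 * (W 1).eval c) := by
  set a := A.eval c with ha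
  set b := B.eval c with hb
  have ha0 : a ≠ 0 := fun h => hAB (by rw [h, zero_mul])
  have hb0 : b ≠ 0 := fun h => hAB (by rw [h, mul_zero])
  set s := Real.sqrt (-(a ^ 2 + 4 * b)) with hs
  clear_value a b
  by_cases hD : a ^ 2 + 4 * b < 0
  · -- main case: negative discriminant
    have hspos : 0 < s := Real.sqrt_pos.mpr (by linarith)
    have hs2 : s ^ 2 = -(a ^ 2 + 4 * b) := Real.sq_sqrt (by linarith)
    clear_value s
    have hbneg : b < 0 := by nlinarith [sq_nonneg a]
    set ρ := Real.sqrt (-b) with hρ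
    have hρpos : 0 < ρ := Real.sqrt_pos.mpr (by linarith)
    have hρ2 : ρ ^ 2 = -b := Real.sq_sqrt (by linarith)
    clear_value ρ
    have hsum : a ^ 2 + s ^ 2 = 4 * ρ ^ 2 := by rw [hs2, hρ2]; ring
    have hsinpos : 0 < Real.sin θ := Real.sin_pos_of_pos_of_lt_pi hθ.1 hθ.2
    have htanne : Real.tan θ ≠ 0 := by
      rw [htan]; exact div_ne_zero (ne_of_gt hspos) ha0
    have hcosne : Real.cos θ ≠ 0 := by
      intro h
      apply htanne
      rw [Real.tan_eq_sin_div_cos, h, div_zero]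
    have hsincos : Real.sin θ * a = Real.cos θ * s := by
      have h := htan
      rw [Real.tan_eq_sin_div_cos, div_eq_div_iff hcosne ha0] at h
      linarith
    have hsinval : Real.sin θ = Real.cos θ * s / a := by
      rw [eq_div_iff ha0]; exact hsincos
    have hpyth : Real.sin θ ^ 2 + Real.cos θ ^ 2 = 1 := Real.sin_sq_add_cos_sq θ
    have h1 : (Real.sin θ * a) ^ 2 = (Real.cos θ * s) ^ 2 := by rw [hsincos]
    have h2 : Real.cos θ ^ 2 * (a ^ 2 + s ^ 2) = a ^ 2 := by
      linear_combination -h1 + a ^ 2 * hpyth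
    have hcos : Real.cos θ = a / (2 * ρ) := by
      have hsq : Real.cos θ ^ 2 = (a / (2 * ρ)) ^ 2 := by
        rw [div_pow, eq_div_iff (by positivity)]
        linear_combination h2 - Real.cos θ ^ 2 * hsum
      rcases sq_eq_sq_iff_eq_or_eq_neg.mp hsq with h | h
      · exact h
      · exfalso
        have hsinneg : Real.sin θ = -(s / (2 * ρ)) := by
          rw [hsinval, h]
          field_simp
        have : 0 < s / (2 * ρ) := div_pos hspos (by linarith)
        linarith
    have hsin : Real.sin θ = s / (2 * ρ) := by
      rw [hsinval, hcos]
      field_simp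
    have ha2 : a = 2 * ρ * Real.cos θ := by
      rw [hcos]; field_simp
    have hb2 : b = -ρ ^ 2 := by linarith [hρ2]
    set k := (2 * (W 1).eval c - a) / s with hk
    -- closed form
    have key : ∀ n : ℕ, (W n).eval c = ρ ^ n * (Real.cos (n * θ) + k * Real.sin (n * θ)) := by
      intro n
      induction n using Nat.twoStepInduction with
      | zero => simp [hW0]
      | one =>
        push_cast
        rw [one_mul, pow_one, hk, hcos, hsin]
        field_simp
        ring
      | more n ih1 ih2 =>
        have hrecn : (W (n + 2)).eval c = a * (W (n + 1)).eval c + b * (W n).eval c := by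
          rw [hrec (n + 2) (by omega)]
          simp [Polynomial.eval_add, Polynomial.eval_mul, ha, hb]
        rw [hrecn, ih1, ih2, ha2, hb2]
        have e1 : ((n : ℝ) + 2) * θ = ((n : ℝ) + 1) * θ + θ := by ring
        have e2 : (n : ℝ) * θ = ((n : ℝ) + 1) * θ - θ := by ring
        push_cast
        rw [e1, e2, Real.cos_add, Real.sin_add, Real.cos_sub, Real.sin_sub]
        ring
    -- use w r = 0
    have hwr : ρ ^ r * (Real.cos (r * θ) + k * Real.sin (r * θ)) = 0 := by
      rw [← key r]; exact hr.2.1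
    have hzero : Real.cos (r * θ) + k * Real.sin (r * θ) = 0 :=
      (mul_eq_zero.mp hwr).resolve_left (pow_ne_zero r (ne_of_gt hρpos))
    have hk0 : k ≠ 0 := by
      rw [hk]
      exact div_ne_zero (fun h => hAW (by linarith)) (ne_of_gt hspos)
    have hsinr : Real.sin (r * θ) ≠ 0 := by
      intro h2
      rw [h2, mul_zero, add_zero] at hzero
      have := Real.sin_sq_add_cos_sq ((r : ℝ) * θ)
      rw [h2, hzero] at this
      norm_num at this
    have hcosr : Real.cos (r * θ) ≠ 0 := by
      intro h
      rw [h, zero_add] at hzero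
      exact hsinr ((mul_eq_zero.mp hzero).resolve_left hk0)
    have hcosval : Real.cos (r * θ) = -(k * Real.sin (r * θ)) := by linarith
    rw [Real.tan_eq_sin_div_cos, hcosval,
      div_eq_div_iff (neg_ne_zero.mpr (mul_ne_zero hk0 hsinr)) hAW, hk]
    field_simp
    ring
  · -- degenerate case: s = 0, both sides are 0
    have hs0 : s = 0 := Real.sqrt_eq_zero'.mpr (by linarith)
    have htan0 : Real.tan θ = 0 := by rw [htan, hs0, zero_div]
    obtain ⟨m, hm⟩ := Real.tan_eq_zero_iff.mp htan0
    have hz : Real.tan (r * θ) = 0 := by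
      have e : (r : ℝ) * θ = ((r * m : ℤ) : ℝ) * Real.pi / 2 := by
        rw [← hm]; push_cast; ring
      rw [e]
      exact Real.tan_eq_zero_iff.mpr ⟨r * m, rfl⟩
    rw [hz, hs0, zero_div]
end
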